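/- arXiv:2512.17109 — 3 statements merged into one kernel-verified Lean document; each statement's English description precedes it below -/
import Mathlib

section
/- Let K ≥ 1, let H_1, …, H_K be real symmetric positive definite n×n matrices with λ = max_k λ_max(H_k), let π_1, …, π_K be nonnegative reals with ∑_k π_k = 1, let w_1, …, w_K ∈ ℝ^n, and set Δ_max = max_{j,k} ‖w_j − w_k‖. For each k define the quadratic task loss L_k(w) = c_k + (1/2)(w − w_k)^T H_k (w − w_k) with c_k ∈ ℝ. Then the merged model w* = (∑_k π_k H_k)^{−1}(∑_k π_k H_k w_k) satisfies ∑_k π_k L_k(w*) ≤ ∑_k π_k c_k + (1/2)·λ·Δ_max². -/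
open Matrix

/-- The largest eigenvalue of a real symmetric (Hermitian) matrix (junk value `0` if the
matrix is not Hermitian). -/
noncomputable def eigMax {n : ℕ} (A : Matrix (Fin n) (Fin n) ℝ) : ℝ :=
  if h : A.IsHermitian then ⨆ i, h.eigenvalues i else 0

/-!
Put `A = ∑ k, π k • H k` and let `w*` solve `A w* = ∑ k, π k • H k w k`. Writing
`v - w k = (v - w*) + (w* - w k)`, the cross terms of the expected excess loss cancel, which leaves
`(v - w*)ᵀ A (v - w*) / 2` plus its value at `w*`; so `w*` minimises it. At a task optimum
`v = w j` every term `(w j - w k)ᵀ H k (w j - w k)` is at most `λ ‖w j - w k‖² ≤ λ Δ_max²`.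
-/

open scoped MatrixOrder

section QuadraticForm

variable {ι m R : Type*} [Fintype ι] [Fintype m] [CommRing R]

theorem Matrix.IsSymm.dotProduct_mulVec_add_add {H : Matrix m m R} (hH : H.IsSymm)
    (a b : m → R) :
    (a + b) ⬝ᵥ H *ᵥ (a + b) = a ⬝ᵥ H *ᵥ a + 2 * (a ⬝ᵥ H *ᵥ b) + b ⬝ᵥ H *ᵥ b := by
  have hba : b ⬝ᵥ H *ᵥ a = a ⬝ᵥ H *ᵥ b := by
    rw [dotProduct_mulVec, ← mulVec_transpose, hH.eq, dotProduct_comm]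
  rw [add_dotProduct, mulVec_add, dotProduct_add, dotProduct_add, hba]
  ring

theorem Matrix.dotProduct_sum_smul_mulVec (π : ι → R) (H : ι → Matrix m m R) (a b : m → R) :
    a ⬝ᵥ (∑ k, π k • H k) *ᵥ b = ∑ k, π k * (a ⬝ᵥ H k *ᵥ b) := by
  simp only [sum_mulVec, dotProduct_sum, smul_mulVec, dotProduct_smul, smul_eq_mul]

/-- Twice the expected excess loss `∑ k, π k * (L_k v - c k)` of a merged model `v`. -/
def mergeObjective (π : ι → R) (H : ι → Matrix m m R) (w : ι → m → R) (v : m → R) : R :=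
  ∑ k, π k * ((v - w k) ⬝ᵥ H k *ᵥ (v - w k))

theorem mergeObjective_eq_add {π : ι → R} {H : ι → Matrix m m R} (hH : ∀ k, (H k).IsSymm)
    {w : ι → m → R} {x : m → R} (hx : (∑ k, π k • H k) *ᵥ x = ∑ k, π k • H k *ᵥ w k)
    (v : m → R) :
    mergeObjective π H w v =
      (v - x) ⬝ᵥ (∑ k, π k • H k) *ᵥ (v - x) + mergeObjective π H w x := by
  have hcross : ∑ k, π k * ((v - x) ⬝ᵥ H k *ᵥ (x - w k)) = 0 := by
    simp only [mulVec_sub, dotProduct_sub, mul_sub, Finset.sum_sub_distrib,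
      ← dotProduct_sum_smul_mulVec, hx]
    simp only [dotProduct_sum, dotProduct_smul, smul_eq_mul, sub_self]
  have hsplit : ∀ k, v - w k = (v - x) + (x - w k) := fun k =>
    (sub_add_sub_cancel v x (w k)).symm
  simp only [mergeObjective, hsplit, (hH _).dotProduct_mulVec_add_add, mul_add,
    Finset.sum_add_distrib, dotProduct_sum_smul_mulVec, mul_left_comm _ (2 : R),
    ← Finset.mul_sum, hcross]
  ring

end QuadraticForm

theorem Matrix.posDef_sum_smul {ι m : Type*} [Fintype ι] {π : ι → ℝ} (hπ : ∀ k, 0 ≤ π k)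
    {j : ι} (hj : 0 < π j) {H : ι → Matrix m m ℝ} (hH : ∀ k, (H k).PosDef) :
    (∑ k, π k • H k).PosDef := by
  classical
  rw [← Finset.add_sum_erase _ _ (Finset.mem_univ j)]
  exact ((hH j).smul hj).add_posSemidef
    (posSemidef_sum _ fun k _ => (hH k).posSemidef.smul (hπ k))

theorem Matrix.IsHermitian.dotProduct_mulVec_le {m : Type*} [Fintype m] [DecidableEq m]
    {M : Matrix m m ℝ} (hM : M.IsHermitian) {c : ℝ} (hc : ∀ i, hM.eigenvalues i ≤ c)
    (x : m → ℝ) : x ⬝ᵥ M *ᵥ x ≤ c * (x ⬝ᵥ x) := by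
  have hle : M ≤ algebraMap ℝ (Matrix m m ℝ) c := by
    refine le_algebraMap_of_spectrum_le (fun r hr => ?_) hM
    obtain ⟨i, rfl⟩ := hM.spectrum_real_eq_range_eigenvalues ▸ hr
    exact hc i
  have := (Matrix.le_iff.mp hle).dotProduct_mulVec_nonneg x
  simpa only [Algebra.algebraMap_eq_smul_one, star_trivial, sub_mulVec, smul_mulVec, one_mulVec,
    dotProduct_sub, dotProduct_smul, smul_eq_mul, sub_nonneg] using this

theorem mergeObjective_le_of_mulVec_eq {ι m : Type*} [Fintype ι] [Fintype m] {π : ι → ℝ}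
    {H : ι → Matrix m m ℝ} (hH : ∀ k, (H k).IsSymm) (hA : (∑ k, π k • H k).PosSemidef)
    {w : ι → m → ℝ} {x : m → ℝ} (hx : (∑ k, π k • H k) *ᵥ x = ∑ k, π k • H k *ᵥ w k)
    (v : m → ℝ) : mergeObjective π H w x ≤ mergeObjective π H w v := by
  rw [mergeObjective_eq_add hH hx v, le_add_iff_nonneg_left]
  simpa using hA.dotProduct_mulVec_nonneg (v - x)

theorem eigenvalues_le_eigMax {n : ℕ} {M : Matrix (Fin n) (Fin n) ℝ} (hM : M.IsHermitian)
    (i : Fin n) : hM.eigenvalues i ≤ eigMax M := by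
  rw [eigMax, dif_pos hM]
  exact Finite.le_ciSup _ i

theorem eigMax_nonneg {n : ℕ} {M : Matrix (Fin n) (Fin n) ℝ} (hM : M.PosSemidef) :
    0 ≤ eigMax M := by
  rw [eigMax, dif_pos hM.1]
  exact Real.iSup_nonneg hM.eigenvalues_nonneg

theorem mergeObjective_le_mul_of_eigMax_le {K n : ℕ} {π : Fin K → ℝ} (hπ : ∀ k, 0 ≤ π k)
    (hπsum : ∑ k, π k = 1) {H : Fin K → Matrix (Fin n) (Fin n) ℝ} (hH : ∀ k, (H k).IsHermitian)
    {lam : ℝ} (hlam : ∀ k, eigMax (H k) ≤ lam) (hlam0 : 0 ≤ lam) {w : Fin K → Fin n → ℝ}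
    {v : Fin n → ℝ} {D : ℝ} (hD : ∀ k, (v - w k) ⬝ᵥ (v - w k) ≤ D) :
    mergeObjective π H w v ≤ lam * D := by
  calc mergeObjective π H w v ≤ ∑ k, π k * (lam * D) := by
        refine Finset.sum_le_sum fun k _ => mul_le_mul_of_nonneg_left ?_ (hπ k)
        calc (v - w k) ⬝ᵥ H k *ᵥ (v - w k) ≤ lam * ((v - w k) ⬝ᵥ (v - w k)) :=
              (hH k).dotProduct_mulVec_le
                (fun i => (eigenvalues_le_eigMax (hH k) i).trans (hlam k)) _
          _ ≤ lam * D := mul_le_mul_of_nonneg_left (hD k) hlam0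
    _ = lam * D := by rw [← Finset.sum_mul, hπsum, one_mul]

theorem dotProduct_sub_self_le_sq_iSup {ι m : Type*} [Finite ι] [Fintype m] (w : ι → m → ℝ)
    (j k : ι) :
    (w j - w k) ⬝ᵥ (w j - w k) ≤ (⨆ j, ⨆ k, Real.sqrt (∑ i, (w j i - w k i) ^ 2)) ^ 2 := by
  have hsq : (w j - w k) ⬝ᵥ (w j - w k) = Real.sqrt (∑ i, (w j i - w k i) ^ 2) ^ 2 := by
    rw [Real.sq_sqrt (Finset.sum_nonneg fun i _ => sq_nonneg _)]
    simp [dotProduct, sq]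
  rw [hsq]
  gcongr
  exact (Finite.le_ciSup (fun k => Real.sqrt (∑ i, (w j i - w k i) ^ 2)) k).trans
    (Finite.le_ciSup (fun j => ⨆ k, Real.sqrt (∑ i, (w j i - w k i) ^ 2)) j)

theorem merging_quality_guarantee_general {n K : ℕ}
    (H : Fin K → Matrix (Fin n) (Fin n) ℝ) (hH : ∀ k, (H k).PosDef)
    (lam : ℝ) (hlam : lam = ⨆ k, eigMax (H k))
    (π : Fin K → ℝ) (hπ : ∀ k, 0 ≤ π k) (hπsum : ∑ k, π k = 1)
    (w : Fin K → (Fin n → ℝ)) (c : Fin K → ℝ)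
    (Δmax : ℝ)
    (hΔ : Δmax = ⨆ j, ⨆ k, Real.sqrt (∑ i, (w j i - w k i) ^ 2)) :
    ∑ k, π k * (c k + (1 / 2) * dotProduct
        ((∑ k', π k' • H k')⁻¹.mulVec (∑ k', π k' • (H k').mulVec (w k')) - w k)
        ((H k).mulVec
          ((∑ k', π k' • H k')⁻¹.mulVec (∑ k', π k' • (H k').mulVec (w k')) - w k)))
      ≤ ∑ k, π k * c k + (1 / 2) * lam * Δmax ^ 2 := by
  set A := ∑ k, π k • H k
  set wstar := A⁻¹ *ᵥ ∑ k, π k • H k *ᵥ w k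
  obtain ⟨j, -, hj⟩ : ∃ j ∈ Finset.univ, (0 : ℝ) < π j :=
    Finset.exists_lt_of_sum_lt (by simp [hπsum])
  have hA : A.PosDef := posDef_sum_smul hπ hj hH
  have hwstar : A *ᵥ wstar = ∑ k, π k • H k *ᵥ w k := by
    rw [mulVec_mulVec, mul_nonsing_inv _ (isUnit_iff_isUnit_det A |>.mp hA.isUnit), one_mulVec]
  have hlamk : ∀ k, eigMax (H k) ≤ lam := fun k =>
    hlam ▸ Finite.le_ciSup (fun k => eigMax (H k)) k
  have hbound : mergeObjective π H w wstar ≤ lam * Δmax ^ 2 :=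
    (mergeObjective_le_of_mulVec_eq (fun k => (hH k).1) hA.posSemidef hwstar (w j)).trans
      (mergeObjective_le_mul_of_eigMax_le hπ hπsum (fun k => (hH k).1) hlamk
        ((eigMax_nonneg (hH j).posSemidef).trans (hlamk j))
        (fun k => hΔ ▸ dotProduct_sub_self_le_sq_iSup w j k))
  calc _ = ∑ k, π k * c k + (1 / 2) * mergeObjective π H w wstar := by
        rw [mergeObjective, Finset.mul_sum, ← Finset.sum_add_distrib]
        exact Finset.sum_congr rfl fun k _ => by ring
    _ ≤ _ := by linarith

/-- With quadratic task losses `L_k(v) = c_k + (1/2)(v - w_k)ᵀ H_k (v - w_k)`,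
positive definite Hessians with `λ = max_k λ_max(H_k)`, nonnegative weights `π` summing to 1,
and `Δ_max = max_{j,k} ‖w_j - w_k‖` (Euclidean norm), the curvature-aware merged model
`w* = (∑ k, π k • H k)⁻¹ (∑ k, π k • H k (w k))` satisfies
`∑ k, π k * L_k(w*) ≤ ∑ k, π k * c k + (1/2) * λ * Δ_max²`. -/
theorem merging_quality_guarantee {n K : ℕ} (hK : 1 ≤ K)
    (H : Fin K → Matrix (Fin n) (Fin n) ℝ) (hH : ∀ k, (H k).PosDef)
    (lam : ℝ) (hlam : lam = ⨆ k, eigMax (H k))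
    (π : Fin K → ℝ) (hπ : ∀ k, 0 ≤ π k) (hπsum : ∑ k, π k = 1)
    (w : Fin K → (Fin n → ℝ)) (c : Fin K → ℝ)
    (Δmax : ℝ)
    (hΔ : Δmax = ⨆ j, ⨆ k, Real.sqrt (∑ i, (w j i - w k i) ^ 2)) :
    ∑ k, π k * (c k + (1 / 2) * dotProduct
        ((∑ k', π k' • H k')⁻¹.mulVec (∑ k', π k' • (H k').mulVec (w k')) - w k)
        ((H k).mulVec
          ((∑ k', π k' • H k')⁻¹.mulVec (∑ k', π k' • (H k').mulVec (w k')) - w k)))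
      ≤ ∑ k, π k * c k + (1 / 2) * lam * Δmax ^ 2 :=
  merging_quality_guarantee_general H hH lam hlam π hπ hπsum w c Δmax hΔ
end

section
/- Let T ≥ 1, η₀ > 0, L ≥ 0, σ ≥ 0, σ' ≥ 0, and f* ∈ ℝ. Let f_1, …, f_{T+1} be reals with f* ≤ f_t ≤ f_1 for all t ∈ {1, …, T+1}, and let g_1, …, g_T be nonnegative reals such that for every t ∈ {1, …, T}: (1/2)·g_t² ≤ (√t/η₀)·(f_t − f_{t+1}) + L²·σ'² + (η₀/√t)·L·σ². Then (1/T)·∑_{t=1}^T g_t² ≤ 2(f_1 − f*)/(η₀·√T) + 2L²σ'² + 4η₀Lσ²/√T; in particular min_{t∈{1,…,T}} g_t² is bounded by the same quantity. -/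
/-!
Summing the descent inequality over `t = 1, …, T`, the drift terms `√t (f t - f (t+1))` are
bounded by summation by parts: since `√t` is nondecreasing and `f t ≤ f 1`, their sum is at most
`√T (f 1 - f (T+1)) ≤ √T (f 1 - f*)`. The noise terms contribute `η₀ L σ² ∑ 1/√t ≤ 2 η₀ L σ² √T`.
Dividing by `T` gives the bound on the average, and some term is at most the average.
-/

open Finset

lemma one_div_sqrt_add_one_le {x : ℝ} (hx : 0 ≤ x) :
    1 / √(x + 1) ≤ 2 * (√(x + 1) - √x) := by
  have hpos : 0 < √(x + 1) := Real.sqrt_pos.2 (by linarith)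
  have hmono : √x ≤ √(x + 1) := Real.sqrt_le_sqrt (by linarith)
  have hdiff : (√(x + 1) - √x) * (√(x + 1) + √x) = 1 := by
    linear_combination Real.sq_sqrt (by linarith : 0 ≤ x + 1) - Real.sq_sqrt hx
  rw [div_le_iff₀ hpos]
  nlinarith

lemma sum_Icc_one_div_sqrt_le (T : ℕ) : ∑ t ∈ Icc 1 T, 1 / √(t : ℝ) ≤ 2 * √(T : ℝ) := by
  induction T with
  | zero => simp
  | succ n ih =>
    rw [sum_Icc_succ_top (by omega)]
    have hstep := one_div_sqrt_add_one_le (Nat.cast_nonneg (α := ℝ) n)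
    push_cast
    linarith

lemma sum_Icc_mul_sub_succ_le {w f : ℕ → ℝ} (hw : Monotone w) (T : ℕ)
    (hf : ∀ t, 1 ≤ t → t ≤ T + 1 → f t ≤ f 1) :
    ∑ t ∈ Icc 1 T, w t * (f t - f (t + 1)) ≤ w T * (f 1 - f (T + 1)) := by
  induction T with
  | zero => simp
  | succ n ih =>
    rw [sum_Icc_succ_top (by omega)]
    have hsum := ih fun t h₁ h₂ => hf t h₁ (by omega)
    have hweight : w n * (f 1 - f (n + 1)) ≤ w (n + 1) * (f 1 - f (n + 1)) :=
      mul_le_mul_of_nonneg_right (hw n.le_succ) (sub_nonneg.2 (hf (n + 1) (by omega) (by omega)))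
    linear_combination hsum + hweight

lemma sum_sq_le_of_descent {T : ℕ} {η₀ L σ σ' fstar : ℝ} {f g : ℕ → ℝ} (hη : 0 < η₀)
    (hL : 0 ≤ L) (hf : ∀ t, 1 ≤ t → t ≤ T + 1 → fstar ≤ f t ∧ f t ≤ f 1)
    (hdesc : ∀ t, 1 ≤ t → t ≤ T →
      (1 / 2) * g t ^ 2 ≤ (√(t : ℝ) / η₀) * (f t - f (t + 1)) +
        L ^ 2 * σ' ^ 2 + (η₀ / √(t : ℝ)) * L * σ ^ 2) :
    ∑ t ∈ Icc 1 T, g t ^ 2 ≤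
      2 * √(T : ℝ) * (f 1 - fstar) / η₀ + 2 * T * L ^ 2 * σ' ^ 2 + 4 * η₀ * L * σ ^ 2 * √(T : ℝ) := by
  have hsummed : ∑ t ∈ Icc 1 T, (1 / 2) * g t ^ 2 ≤
      (∑ t ∈ Icc 1 T, √(t : ℝ) * (f t - f (t + 1))) / η₀ + T * (L ^ 2 * σ' ^ 2) +
        η₀ * L * σ ^ 2 * ∑ t ∈ Icc 1 T, 1 / √(t : ℝ) := by
    refine (sum_le_sum fun t ht => hdesc t (mem_Icc.1 ht).1 (mem_Icc.1 ht).2).trans_eq ?_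
    simp only [sum_add_distrib, sum_const, Nat.card_Icc, add_tsub_cancel_right, nsmul_eq_mul,
      sum_div, mul_sum]
    congr 2
    · exact sum_congr rfl fun t _ => by ring
    · ext t; ring
  have hdrift := sum_Icc_mul_sub_succ_le (w := fun t : ℕ => √(t : ℝ))
    (Real.sqrt_monotone.comp Nat.mono_cast) T fun t h₁ h₂ => (hf t h₁ h₂).2
  have hfstar : fstar ≤ f (T + 1) := (hf (T + 1) (by omega) le_rfl).1
  have hdrift' : (∑ t ∈ Icc 1 T, √(t : ℝ) * (f t - f (t + 1))) / η₀ ≤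
      √(T : ℝ) * (f 1 - fstar) / η₀ :=
    div_le_div_of_nonneg_right (hdrift.trans (by gcongr)) hη.le
  have hnoise := mul_le_mul_of_nonneg_left (sum_Icc_one_div_sqrt_le T)
    (by positivity : 0 ≤ η₀ * L * σ ^ 2)
  rw [← mul_sum] at hsummed
  linear_combination 2 * hsummed + 2 * hdrift' + 2 * hnoise

theorem nonconvex_rate_core_general (T : ℕ) (hT : 1 ≤ T)
    (η₀ L σ σ' fstar : ℝ) (hη : 0 < η₀) (hL : 0 ≤ L)
    (f : ℕ → ℝ) (g : ℕ → ℝ)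
    (hf : ∀ t, 1 ≤ t → t ≤ T + 1 → fstar ≤ f t ∧ f t ≤ f 1)
    (hdesc : ∀ t, 1 ≤ t → t ≤ T →
      (1 / 2) * g t ^ 2 ≤ (Real.sqrt t / η₀) * (f t - f (t + 1)) +
        L ^ 2 * σ' ^ 2 + (η₀ / Real.sqrt t) * L * σ ^ 2) :
    (1 / (T : ℝ)) * ∑ t ∈ Finset.Icc 1 T, g t ^ 2 ≤
      2 * (f 1 - fstar) / (η₀ * Real.sqrt T) + 2 * L ^ 2 * σ' ^ 2 +
        4 * η₀ * L * σ ^ 2 / Real.sqrt T ∧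
    ∃ t ∈ Finset.Icc 1 T, g t ^ 2 ≤
      2 * (f 1 - fstar) / (η₀ * Real.sqrt T) + 2 * L ^ 2 * σ' ^ 2 +
        4 * η₀ * L * σ ^ 2 / Real.sqrt T := by
  set B := 2 * (f 1 - fstar) / (η₀ * √(T : ℝ)) + 2 * L ^ 2 * σ' ^ 2 +
    4 * η₀ * L * σ ^ 2 / √(T : ℝ)
  have hTpos : (0 : ℝ) < T := by exact_mod_cast hT
  have hTB : T * B =
      2 * √(T : ℝ) * (f 1 - fstar) / η₀ + 2 * T * L ^ 2 * σ' ^ 2 + 4 * η₀ * L * σ ^ 2 * √(T : ℝ) := by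
    have hsqrtT : 0 < √(T : ℝ) := Real.sqrt_pos.2 hTpos
    have hsq : √(T : ℝ) ^ 2 = T := Real.sq_sqrt hTpos.le
    simp only [B]
    field_simp
    linear_combination (-2 * (f 1 - fstar) - 4 * η₀ ^ 2 * L * σ ^ 2) * hsq
  have hbound : ∑ t ∈ Icc 1 T, g t ^ 2 ≤ T * B := hTB ▸ sum_sq_le_of_descent hη hL hf hdesc
  refine ⟨by rwa [one_div, inv_mul_le_iff₀ hTpos], exists_le_of_sum_le ⟨1, by simp [hT]⟩ ?_⟩
  simpa [sum_const, Nat.card_Icc] using hbound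

/-- Deterministic core of the non-convex convergence theorem: if values
`f t` along the trajectory lie in `[f*, f 1]`, the nonnegative quantities `g t` satisfy the
per-step descent inequality
`(1/2) * (g t)² ≤ (√t / η₀) * (f t - f (t+1)) + L² * σ'² + (η₀ / √t) * L * σ²`
for `t = 1, …, T`, then the average of `(g t)²` is bounded by
`2 (f 1 - f*)/(η₀ √T) + 2 L² σ'² + 4 η₀ L σ² / √T`; in particular the minimum of `(g t)²`
over `t ∈ {1, …, T}` is bounded by the same quantity. -/
theorem nonconvex_rate_core (T : ℕ) (hT : 1 ≤ T)
    (η₀ L σ σ' fstar : ℝ) (hη : 0 < η₀) (hL : 0 ≤ L) (hσ : 0 ≤ σ) (hσ' : 0 ≤ σ')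
    (f : ℕ → ℝ) (g : ℕ → ℝ)
    (hf : ∀ t, 1 ≤ t → t ≤ T + 1 → fstar ≤ f t ∧ f t ≤ f 1)
    (hg : ∀ t, 1 ≤ t → t ≤ T → 0 ≤ g t)
    (hdesc : ∀ t, 1 ≤ t → t ≤ T →
      (1 / 2) * g t ^ 2 ≤ (Real.sqrt t / η₀) * (f t - f (t + 1)) +
        L ^ 2 * σ' ^ 2 + (η₀ / Real.sqrt t) * L * σ ^ 2) :
    (1 / (T : ℝ)) * ∑ t ∈ Finset.Icc 1 T, g t ^ 2 ≤
      2 * (f 1 - fstar) / (η₀ * Real.sqrt T) + 2 * L ^ 2 * σ' ^ 2 +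
        4 * η₀ * L * σ ^ 2 / Real.sqrt T ∧
    ∃ t ∈ Finset.Icc 1 T, g t ^ 2 ≤
      2 * (f 1 - fstar) / (η₀ * Real.sqrt T) + 2 * L ^ 2 * σ' ^ 2 +
        4 * η₀ * L * σ ^ 2 / Real.sqrt T :=
  nonconvex_rate_core_general T hT η₀ L σ σ' fstar hη hL f g hf hdesc
end

section
/- Let T ≥ 1 and let f_1, …, f_{T+1} be real numbers and f* ∈ ℝ such that f_t ≤ f_1 for all t ∈ {2, …, T} and f_{T+1} ≥ f*. Then ∑_{t=1}^T √t · (f_t − f_{t+1}) ≤ √T · (f_1 − f*). -/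
lemma weighted_telescoping_aux (f : ℕ → ℝ) :
    ∀ T : ℕ, 1 ≤ T → (∀ t, 2 ≤ t → t ≤ T → f t ≤ f 1) →
    ∑ t ∈ Finset.Icc 1 T, Real.sqrt t * (f t - f (t + 1)) ≤
      Real.sqrt T * (f 1 - f (T + 1)) := by
  intro T hT1 hub
  induction T, hT1 using Nat.le_induction with
  | base =>
    simp
  | succ n hn ih =>
    rw [Finset.sum_Icc_succ_top (by omega : 1 ≤ n + 1)]
    have h1 : ∑ t ∈ Finset.Icc 1 n, Real.sqrt t * (f t - f (t + 1)) ≤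
        Real.sqrt n * (f 1 - f (n + 1)) :=
      ih (fun t h2t htn => hub t h2t (by omega))
    have h2 : f (n + 1) ≤ f 1 := hub (n + 1) (by omega) le_rfl
    have h3 : Real.sqrt n ≤ Real.sqrt (n + 1) := by
      apply Real.sqrt_le_sqrt; push_cast; linarith
    have h4 : (Real.sqrt (n + 1) - Real.sqrt n) * (f 1 - f (n + 1)) ≥ 0 :=
      mul_nonneg (by linarith) (by linarith)
    push_cast
    nlinarith [h1, h4]

/-- If `f t ≤ f 1` for `t ∈ {2, …, T}` and `f (T+1) ≥ f*`, then the
weighted telescoping sum satisfies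
`∑_{t=1}^T √t * (f t - f (t+1)) ≤ √T * (f 1 - f*)`. -/
theorem weighted_telescoping_bound (T : ℕ) (hT : 1 ≤ T)
    (f : ℕ → ℝ) (fstar : ℝ)
    (hub : ∀ t, 2 ≤ t → t ≤ T → f t ≤ f 1)
    (hlb : fstar ≤ f (T + 1)) :
    ∑ t ∈ Finset.Icc 1 T, Real.sqrt t * (f t - f (t + 1)) ≤
      Real.sqrt T * (f 1 - fstar) := by
  have := weighted_telescoping_aux f T hT hub
  have hs : (0:ℝ) ≤ Real.sqrt T := Real.sqrt_nonneg _
  nlinarith [this, mul_le_mul_of_nonneg_left (sub_le_sub_left hlb (f 1)) hs]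
end
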